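/- arXiv:2009.08158 — 5 statements merged into one kernel-verified Lean document; each statement's English description precedes it below -/
import Mathlib

section
/- Let G be a graph, L the set of vertices of degree at most p−1, and S = V(G) \ L. Then G has a vertex cover C such that G[C] is p-edge-connected if and only if S is a vertex cover of G and G[S] is p-edge-connected. -/
/-!
A `p`-edge-connected graph has minimum degree at least `p`: deleting the edges at a vertex
isolates it. So a cover `C` with `G[C]` `p`-edge-connected lies inside `S`, and `S`, being
larger, is a cover as well. Every vertex of `S \ C` has all its at least `p` neighbours in `C`,
so deleting fewer than `p` edges of `G[S]` leaves it joined to `C`, and `C` itself stays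
connected; hence `G[S]` is `p`-edge-connected.
-/

/-- `C` is a vertex cover of `G`: every edge has an endpoint in `C`. -/
def IsVertexCover {V : Type*} (G : SimpleGraph V) (C : Set V) : Prop :=
  ∀ ⦃u v : V⦄, G.Adj u v → u ∈ C ∨ v ∈ C

/-- A graph is `p`-edge-connected if it has at least two vertices and removing
any set of fewer than `p` edges leaves it connected. -/
def PEdgeConnected {V : Type*} (G : SimpleGraph V) (p : ℕ) : Prop :=
  (∃ a b : V, a ≠ b) ∧
    ∀ Y : Set (Sym2 V), Y.encard < (p : ℕ∞) → (G.deleteEdges Y).Connected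

namespace SimpleGraph

variable {V W : Type*} {G : SimpleGraph V} {H : SimpleGraph W} {k : ℕ}

lemma pEdgeConnected_iff : PEdgeConnected G k ↔ Nontrivial V ∧ G.IsEdgeConnected k := by
  constructor
  · rintro ⟨hV, hconn⟩
    exact ⟨⟨hV⟩, fun u v s hs ↦ (hconn s hs).preconnected u v⟩
  · rintro ⟨hV, hconn⟩
    exact ⟨hV.exists_pair_ne, fun s hs ↦ ⟨fun u v ↦ hconn u v hs⟩⟩

lemma exists_adj_deleteEdges_of_encard_lt_degree {v : V} [Fintype (G.neighborSet v)]
    {s : Set (Sym2 V)} (hs : s.encard < G.degree v) : ∃ w, (G.deleteEdges s).Adj v w := by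
  classical
  by_contra! hisolated
  have hsub : G.incidenceSet v ⊆ s := fun e ⟨hadj, hv⟩ ↦ by
    obtain ⟨w, rfl⟩ := Sym2.mem_iff_exists.mp hv
    by_contra hw
    exact hisolated w (deleteEdges_adj.mpr ⟨hadj, hw⟩)
  rw [← card_incidenceSet_eq_degree, Set.coe_fintypeCard] at hs
  exact (Set.encard_mono hsub).not_gt hs

lemma IsEdgeReachable.map (f : Copy G H) {u v : V} (h : G.IsEdgeReachable k u v) :
    H.IsEdgeReachable k (f u) (f v) := by
  intro s hs
  have hpre : (Sym2.map f ⁻¹' s).encard < k :=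
    calc (Sym2.map f ⁻¹' s).encard = (Sym2.map f '' (Sym2.map f ⁻¹' s)).encard :=
          ((Sym2.map.injective f.injective).encard_image _).symm
      _ ≤ s.encard := Set.encard_mono (Set.image_preimage_subset _ _)
      _ < k := hs
  let g : G.deleteEdges (Sym2.map f ⁻¹' s) →g H.deleteEdges s :=
    ⟨f, fun huv ↦ deleteEdges_adj.mpr ⟨f.toHom.map_adj (deleteEdges_adj.mp huv).1,
      (deleteEdges_adj.mp huv).2⟩⟩
  exact (h hpre).map g

lemma IsEdgeConnected.induce_of_subset [Fintype V] [DecidableRel G.Adj] {C S : Set V}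
    (hCS : C ⊆ S) (hnbr : ∀ v ∈ S \ C, G.neighborSet v ⊆ C) (hdeg : ∀ v ∈ S \ C, k ≤ G.degree v)
    (hC : (G.induce C).IsEdgeConnected k) : (G.induce S).IsEdgeConnected k := by
  classical
  let ι : Copy (G.induce C) (G.induce S) := (induceHomOfLE G hCS).toCopy
  intro u v s hs
  have reach_C : ∀ w : S, ∃ c : C, ((G.induce S).deleteEdges s).Reachable w (ι c) := by
    intro w
    by_cases hw : w.1 ∈ C
    · exact ⟨⟨w, hw⟩, .rfl⟩
    have hlt : s.encard < (G.induce S).degree w := by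
      rw [degree_induce_of_neighborSet_subset ((hnbr w ⟨w.2, hw⟩).trans hCS)]
      exact hs.trans_le (by exact_mod_cast hdeg w ⟨w.2, hw⟩)
    obtain ⟨x, hx⟩ := exists_adj_deleteEdges_of_encard_lt_degree hlt
    exact ⟨⟨x, hnbr w ⟨w.2, hw⟩ (deleteEdges_adj.mp hx).1⟩, hx.reachable⟩
  obtain ⟨a, ha⟩ := reach_C u
  obtain ⟨b, hb⟩ := reach_C v
  exact ha.trans (((hC a b).map ι hs).trans hb.symm)

end SimpleGraph

theorem stmt2_general {V : Type*} [Fintype V] (G : SimpleGraph V)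
    [DecidableRel G.Adj] (p : ℕ) :
    (∃ C : Set V, IsVertexCover G C ∧ PEdgeConnected (G.induce C) p) ↔
      (IsVertexCover G {v : V | p ≤ G.degree v} ∧
        PEdgeConnected (G.induce {v : V | p ≤ G.degree v}) p) := by
  classical
  refine ⟨fun ⟨C, hcov, hC⟩ ↦ ?_, fun hS ↦ ⟨_, hS⟩⟩
  obtain ⟨hCnontriv, hconn⟩ := SimpleGraph.pEdgeConnected_iff.mp hC
  have hCS : C ⊆ {v | p ≤ G.degree v} := fun v hv ↦
    (hconn.le_degree (u := ⟨v, hv⟩)).trans ((SimpleGraph.Copy.induce G C).degree_le _)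
  have hScov : IsVertexCover G {v | p ≤ G.degree v} := fun u v huv ↦
    (hcov huv).imp (@hCS _) (@hCS _)
  have hSconn : (G.induce {v | p ≤ G.degree v}).IsEdgeConnected p :=
    hconn.induce_of_subset hCS (fun _ hv _ hx ↦ (hcov hx).resolve_left hv.2) fun _ hv ↦ hv.1
  exact ⟨hScov, SimpleGraph.pEdgeConnected_iff.mpr
    ⟨(Set.inclusion_injective hCS).nontrivial, hSconn⟩⟩

/-- `G` has a vertex cover inducing a `p`-edge-connected subgraph iff the set `S`
of vertices of degree at least `p` (the complement of the set `L` of vertices of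
degree at most `p - 1`) is such a vertex cover. -/
theorem stmt2 {V : Type*} [Fintype V] [DecidableEq V] (G : SimpleGraph V)
    [DecidableRel G.Adj] (p : ℕ) :
    (∃ C : Set V, IsVertexCover G C ∧ PEdgeConnected (G.induce C) p) ↔
      (IsVertexCover G {v : V | p ≤ G.degree v} ∧
        PEdgeConnected (G.induce {v : V | p ≤ G.degree v}) p) :=
  stmt2_general G p
end

section
/- Let G be a graph, L the set of vertices of degree at most p−1, and S = V(G) \ L. Then G has a vertex cover C such that G[C] is p-vertex-connected if and only if S is a vertex cover of G and G[S] is p-vertex-connected. -/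
/-- A graph is `p`-vertex-connected if it has more than `p` vertices and removing
any set of fewer than `p` vertices leaves it connected. -/
def PVertexConnected {V : Type*} (G : SimpleGraph V) (p : ℕ) : Prop :=
  (p : ℕ∞) < (Set.univ : Set V).encard ∧
    ∀ X : Set V, X.encard < (p : ℕ∞) → (G.induce Xᶜ).Connected

open Set Set.Notation

namespace SimpleGraph

variable {V W : Type*}

theorem encard_neighborSet (G : SimpleGraph V) [Fintype V] [DecidableRel G.Adj] (v : V) :
    (G.neighborSet v).encard = G.degree v := by
  rw [← card_neighborSet_eq_degree, encard_eq_coe_toFinset_card, toFinset_card]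

theorem Connected.of_hom {G : SimpleGraph V} {G' : SimpleGraph W} (hG : G.Connected)
    (f : G →g G') (hf : ∀ w, ∃ v, G'.Reachable w (f v)) : G'.Connected := by
  obtain ⟨v₀⟩ := hG.nonempty
  refine (connected_iff _).mpr ⟨fun w₁ w₂ => ?_, ⟨f v₀⟩⟩
  obtain ⟨v₁, h₁⟩ := hf w₁
  obtain ⟨v₂, h₂⟩ := hf w₂
  exact h₁.trans (((hG.preconnected v₁ v₂).map f).trans h₂.symm)

def induceInduceIso (G : SimpleGraph V) {C S : Set V} (hCS : C ⊆ S) :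
    (G.induce S).induce (S ↓∩ C) ≃g G.induce C where
  toFun v := ⟨v.1.1, v.2⟩
  invFun w := ⟨⟨w.1, hCS w.2⟩, w.2⟩
  left_inv _ := rfl
  right_inv _ := rfl
  map_rel_iff' := Iff.rfl

end SimpleGraph

namespace IsVertexCover

variable {V : Type*} {G : SimpleGraph V} {C : Set V}

theorem mono (hC : IsVertexCover G C) {S : Set V} (hCS : C ⊆ S) : IsVertexCover G S :=
  fun _ _ huv => (hC huv).imp (@hCS _) (@hCS _)

theorem neighborSet_subset (hC : IsVertexCover G C) {v : V} (hv : v ∉ C) :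
    G.neighborSet v ⊆ C :=
  fun _ huv => (hC huv).resolve_left hv

end IsVertexCover

namespace PVertexConnected

variable {V W : Type*} {G : SimpleGraph V} {p : ℕ}

theorem of_iso {G' : SimpleGraph W} (h : PVertexConnected G p) (e : G ≃g G') :
    PVertexConnected G' p := by
  refine ⟨?_, fun X hX => ?_⟩
  · simpa only [encard_univ, ENat.card_congr e.toEquiv] using h.1
  · have hX' : (e ⁻¹' X).encard < p := by rwa [encard_preimage_of_bijective e.bijective]
    have he : BijOn e (e ⁻¹' X)ᶜ Xᶜ := by
      rw [← preimage_compl]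
      exact e.bijective.bijOn_preimage
    exact (e.induce he).connected_iff.mp (h.2 _ hX')

theorem le_encard_neighborSet (h : PVertexConnected G p) (v : V) :
    (p : ℕ∞) ≤ (G.neighborSet v).encard := by
  by_contra! hlt
  set N := G.neighborSet v
  have hrest : Nontrivial ↥Nᶜ := by
    rw [nontrivial_coe_sort, ← one_lt_encard_iff_nontrivial]
    by_contra! hle
    refine h.1.not_ge ?_
    calc (univ : Set V).encard = N.encard + Nᶜ.encard := (encard_add_encard_compl N).symm
      _ ≤ N.encard + 1 := by gcongr
      _ ≤ p := Order.add_one_le_of_lt hlt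
  obtain ⟨u, hu⟩ :=
    (h.2 N hlt).preconnected.exists_adj_of_nontrivial ⟨v, G.notMem_neighborSet_self⟩
  exact u.2 hu

theorem le_degree_of_induce [Fintype V] [DecidableRel G.Adj] {C : Set V}
    (h : PVertexConnected (G.induce C) p) {v : V} (hv : v ∈ C) : p ≤ G.degree v := by
  have : (p : ℕ∞) ≤ G.degree v := calc
    (p : ℕ∞) ≤ ((G.induce C).neighborSet ⟨v, hv⟩).encard := h.le_encard_neighborSet _
    _ = (C ↓∩ G.neighborSet v).encard := by rw [SimpleGraph.neighborSet_induce]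
    _ ≤ (G.neighborSet v).encard := encard_preimage_val_le_encard_right _ _
    _ = G.degree v := G.encard_neighborSet v
  exact_mod_cast this

theorem of_induce {C : Set V} (hC : PVertexConnected (G.induce C) p)
    (hout : ∀ v ∉ C, (p : ℕ∞) ≤ (G.neighborSet v ∩ C).encard) : PVertexConnected G p := by
  refine ⟨?_, fun X hX => ?_⟩
  · calc (p : ℕ∞) < (univ : Set C).encard := hC.1
      _ = C.encard := by rw [encard_univ]; rfl
      _ ≤ (univ : Set V).encard := encard_le_encard (subset_univ C)
  have hY : (C ↓∩ X).encard < p := (encard_preimage_val_le_encard_right C X).trans_lt hX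
  let f : (G.induce C).induce (C ↓∩ X)ᶜ →g G.induce Xᶜ := ⟨fun a => ⟨a.1.1, a.2⟩, id⟩
  refine (hC.2 _ hY).of_hom f fun w => ?_
  by_cases hw : w.1 ∈ C
  · exact ⟨⟨⟨w.1, hw⟩, w.2⟩, .refl _⟩
  · obtain ⟨u, ⟨hwu, huC⟩, huX⟩ := not_subset.mp fun hsub =>
      (hout w.1 hw).not_gt ((encard_le_encard hsub).trans_lt hX)
    have hadj : (G.induce Xᶜ).Adj w (f ⟨⟨u, huC⟩, huX⟩) := hwu
    exact ⟨_, hadj.reachable⟩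

end PVertexConnected

theorem stmt3_general {V : Type*} [Fintype V] (G : SimpleGraph V)
    [DecidableRel G.Adj] (p : ℕ) :
    (∃ C : Set V, IsVertexCover G C ∧ PVertexConnected (G.induce C) p) ↔
      (IsVertexCover G {v : V | p ≤ G.degree v} ∧
        PVertexConnected (G.induce {v : V | p ≤ G.degree v}) p) := by
  set S := {v : V | p ≤ G.degree v}
  refine ⟨fun ⟨C, hcov, hC⟩ => ?_, fun h => ⟨_, h⟩⟩
  have hCS : C ⊆ S := fun v hv => hC.le_degree_of_induce hv
  refine ⟨hcov.mono hCS, (hC.of_iso (G.induceInduceIso hCS).symm).of_induce fun v hv => ?_⟩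
  have hNC : G.neighborSet v ⊆ C := hcov.neighborSet_subset hv
  calc (p : ℕ∞) ≤ (G.neighborSet v).encard := by rw [G.encard_neighborSet]; exact_mod_cast v.2
    _ = (S ↓∩ G.neighborSet v).encard := by
      refine (encard_preimage_of_injective_subset_range Subtype.val_injective ?_).symm
      simpa using hNC.trans hCS
    _ = ((G.induce S).neighborSet v ∩ (S ↓∩ C)).encard := by
      rw [SimpleGraph.neighborSet_induce, ← preimage_inter, inter_eq_left.mpr hNC]

/-- `G` has a vertex cover inducing a `p`-vertex-connected subgraph iff the set `S`
of vertices of degree at least `p` (the complement of the set `L` of vertices of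
degree at most `p - 1`) is such a vertex cover. -/
theorem stmt3 {V : Type*} [Fintype V] [DecidableEq V] (G : SimpleGraph V)
    [DecidableRel G.Adj] (p : ℕ) :
    (∃ C : Set V, IsVertexCover G C ∧ PVertexConnected (G.induce C) p) ↔
      (IsVertexCover G {v : V | p ≤ G.degree v} ∧
        PVertexConnected (G.induce {v : V | p ≤ G.degree v}) p) :=
  stmt3_general G p
end

section
/- Let G be an undirected graph and v_r ∈ V(G). Let D_G be the digraph obtained by replacing each edge uv of G by both arcs (u,v) and (v,u). Then G is p-edge-connected if and only if D_G contains p pairwise arc-disjoint out-branchings rooted at v_r. -/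
/-- `F` is the arc set of an out-branching (spanning arborescence) rooted at `r`. -/
def IsOutBranching {V : Type*} (F : Set (V × V)) (r : V) : Prop :=
  ({a ∈ F | a.2 = r} = ∅) ∧
    (∀ v : V, v ≠ r → ({a ∈ F | a.2 = v}).ncard = 1) ∧
    (∀ v : V, Relation.ReflTransGen (fun x y => (x, y) ∈ F) r v)

/-!
Both sides are equivalent to Edmonds' cut condition: every nonempty vertex set `X ∌ v_r` is
entered by at least `p` arcs of `D_G`. For `G` this is immediate, because the edges of `G`
crossing the cut `(Xᶜ, X)` are exactly the arcs of `D_G` entering `X`, read without orientation.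
Arc-disjoint out-branchings each enter `X`, giving one direction of Edmonds' branching theorem;
the other is Lovász's greedy proof: grow one arborescence from the root arc by arc, each time
choosing an arc whose removal keeps the remaining arcs `(p - 1)`-connected from the root, which
is possible by submodularity of the in-degree of vertex sets.
-/

open Set Function

theorem Relation.ReflTransGen.exists_boundary_rel {α : Type*} {R : α → α → Prop}
    {X : Set α} {x y : α} (h : Relation.ReflTransGen R x y) (hx : x ∉ X) (hy : y ∈ X) :
    ∃ a b, R a b ∧ a ∉ X ∧ b ∈ X := by
  induction h with
  | refl => exact absurd hy hx
  | @tail b c _ hbc ih =>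
    by_cases hb : b ∈ X
    · exact ih hb
    · exact ⟨b, c, hbc, hb, hy⟩

section

variable {V : Type*}

def IsArborescenceOn (F : Set (V × V)) (r : V) (U : Set V) : Prop :=
  r ∈ U ∧ (∀ a ∈ F, a.2 ∈ U ∧ a.2 ≠ r) ∧
    (∀ v ∈ U, v ≠ r → {a ∈ F | a.2 = v}.ncard = 1) ∧
    (∀ v ∈ U, Relation.ReflTransGen (fun x y => (x, y) ∈ F) r v)

theorem isArborescenceOn_empty (r : V) : IsArborescenceOn ∅ r {r} :=
  ⟨rfl, fun _ ha => ha.elim, fun _ hv hvr => absurd hv hvr,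
    fun _ hv => hv ▸ Relation.ReflTransGen.refl⟩

namespace IsArborescenceOn

variable {F : Set (V × V)} {r u v : V} {U : Set V}

theorem insert_arc (h : IsArborescenceOn F r U) (hu : u ∈ U) (hv : v ∉ U) :
    IsArborescenceOn (insert (u, v) F) r (insert v U) := by
  obtain ⟨hr, hheads, hindeg, hreach⟩ := h
  have hreach' : ∀ w ∈ U, Relation.ReflTransGen (fun x y => (x, y) ∈ insert (u, v) F) r w :=
    fun w hw => Relation.ReflTransGen.mono (fun _ _ => mem_insert_of_mem _) _ _ (hreach w hw)
  refine ⟨mem_insert_of_mem _ hr, ?_, ?_, ?_⟩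
  · rintro a (rfl | ha)
    · exact ⟨mem_insert _ _, fun hvr : v = r => hv (hvr ▸ hr)⟩
    · exact ⟨mem_insert_of_mem _ (hheads a ha).1, (hheads a ha).2⟩
  · rintro w (rfl | hw) hwr
    · convert ncard_singleton (u, w)
      ext a
      simp only [mem_ofPred_eq, mem_insert_iff, mem_singleton_iff]
      exact ⟨fun ⟨ha, haw⟩ => ha.resolve_right fun haF => hv (haw ▸ (hheads a haF).1),
        fun ha => ⟨Or.inl ha, ha ▸ rfl⟩⟩
    · convert hindeg w hw hwr using 2
      ext a
      simp only [mem_ofPred_eq, mem_insert_iff]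
      exact ⟨fun ⟨ha, haw⟩ =>
          ⟨ha.resolve_left fun hau => by subst hau haw; exact hv hw, haw⟩,
        fun ⟨ha, haw⟩ => ⟨Or.inr ha, haw⟩⟩
  · rintro w (rfl | hw)
    · exact (hreach' u hu).tail (mem_insert _ _)
    · exact hreach' w hw

theorem isOutBranching (h : IsArborescenceOn F r univ) : IsOutBranching F r :=
  ⟨eq_empty_iff_forall_notMem.2 fun a ha => (h.2.1 a ha.1).2 ha.2,
    fun v => h.2.2.1 v (mem_univ v), fun v => h.2.2.2 v (mem_univ v)⟩

end IsArborescenceOn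

def inArcs (E : Set (V × V)) (X : Set V) : Set (V × V) :=
  {a ∈ E | a.1 ∉ X ∧ a.2 ∈ X}

noncomputable def inDeg (E : Set (V × V)) (X : Set V) : ℕ :=
  (inArcs E X).ncard

def CutCondition (E : Set (V × V)) (r : V) (k : ℕ) : Prop :=
  ∀ X : Set V, X.Nonempty → r ∉ X → k ≤ inDeg E X

theorem inArcs_diff (E F : Set (V × V)) (X : Set V) :
    inArcs (E \ F) X = inArcs E X \ F := by
  ext a
  simp only [inArcs, mem_ofPred_eq, mem_sdiff]
  tauto

theorem inDeg_univ (E : Set (V × V)) : inDeg E univ = 0 := by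
  simp [inDeg, inArcs]

theorem CutCondition.diff_singleton {E : Set (V × V)} {r : V} {k : ℕ} {a : V × V}
    (h : CutCondition E r k)
    (ha : ∀ Y : Set V, Y.Nonempty → r ∉ Y → a ∈ inArcs E Y → k < inDeg E Y) :
    CutCondition (E \ {a}) r k := by
  intro Y hY hrY
  rw [inDeg, inArcs_diff]
  by_cases haY : a ∈ inArcs E Y
  · have := ha Y hY hrY haY
    rw [ncard_sdiff_singleton_of_mem haY]
    exact Nat.le_sub_one_of_lt this
  · rw [sdiff_singleton_eq_self haY]
    exact h Y hY hrY

theorem injOn_sym2Mk_inArcs (E : Set (V × V)) (X : Set V) :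
    InjOn (uncurry Sym2.mk) (inArcs E X) := by
  rintro a ⟨-, -, ha⟩ b ⟨-, hb, -⟩ hab
  exact (Sym2.mk_eq_mk_iff.1 hab).resolve_right fun hswap => hb (by rwa [hswap] at ha)

variable [Finite V]

theorem inDeg_union_add_inDeg_inter_le (E : Set (V × V)) (X Y : Set V) :
    inDeg E (X ∪ Y) + inDeg E (X ∩ Y) ≤ inDeg E X + inDeg E Y := by
  have hunion : inArcs E (X ∪ Y) ∪ inArcs E (X ∩ Y) ⊆ inArcs E X ∪ inArcs E Y := by
    intro a
    simp only [inArcs, mem_union, mem_inter_iff, mem_ofPred_eq]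
    tauto
  have hinter : inArcs E (X ∪ Y) ∩ inArcs E (X ∩ Y) ⊆ inArcs E X ∩ inArcs E Y := by
    intro a
    simp only [inArcs, mem_union, mem_inter_iff, mem_ofPred_eq]
    tauto
  simp only [inDeg]
  rw [← ncard_union_add_ncard_inter, ← ncard_union_add_ncard_inter (inArcs E X)]
  exact add_le_add (ncard_le_ncard hunion) (ncard_le_ncard hinter)

namespace CutCondition

variable {E F : Set (V × V)} {r : V} {k : ℕ} {U X Y : Set V}

theorem inDeg_inter_le (h : CutCondition E r k) (hrX : r ∉ X) (hrY : r ∉ Y)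
    (hY : Y.Nonempty) (hXk : inDeg E X ≤ k) (hYk : inDeg E Y ≤ k) :
    inDeg E (X ∩ Y) ≤ k := by
  have hunion := h (X ∪ Y) (hY.mono subset_union_right) fun hr => hr.elim hrX hrY
  have := inDeg_union_add_inDeg_inter_le E X Y
  omega

/-- `X \ U` is entered by at least `k + 1` arcs of `E`, none of them in `F`, and at most `k` of
them start outside `X`. -/
theorem exists_arc_into_diff (hE : CutCondition E r (k + 1)) (hFU : ∀ a ∈ F, a.2 ∈ U)
    (hrU : r ∈ U) (hXk : inDeg (E \ F) X ≤ k) (hXU : ¬ X ⊆ U) :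
    ∃ u ∈ X ∩ U, ∃ v ∈ X \ U, (u, v) ∈ E \ F := by
  by_contra! hno
  have hsub : inArcs E (X \ U) ⊆ inArcs (E \ F) X := by
    rintro ⟨u, v⟩ ⟨huvE, hu, hv⟩
    have huv : (u, v) ∈ E \ F := ⟨huvE, fun huvF => hv.2 (hFU _ huvF)⟩
    exact ⟨huv, fun huX => hno u ⟨huX, not_not.1 fun huU => hu ⟨huX, huU⟩⟩ v hv huv, hv.1⟩
  have := hE (X \ U) (sdiff_nonempty.2 hXU) fun hr => hr.2 hrU
  have := ncard_le_ncard hsub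
  simp only [inDeg] at *
  omega

/-- Lovász's augmenting step. Call `X` tight if `inDeg (E \ F) X ≤ k`. For `X` minimal among the
tight sets not inside `U`, an arc of `E \ F` from `X ∩ U` into `X \ U` enters no tight `Y ∌ r`,
since by submodularity `X ∩ Y` would be a smaller such set. -/
theorem exists_safe_arc (hE : CutCondition E r (k + 1)) (hEF : CutCondition (E \ F) r k)
    (hFU : ∀ a ∈ F, a.2 ∈ U) (hrU : r ∈ U) (hU : U ≠ univ) :
    ∃ u ∈ U, ∃ v ∉ U, (u, v) ∈ E \ F ∧ CutCondition (E \ insert (u, v) F) r k := by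
  -- `univ` is admitted so that the family is nonempty even when no tight set leaves `U`.
  set T : Set (Set V) := {X | ¬ X ⊆ U ∧ inDeg (E \ F) X ≤ k ∧ (X = univ ∨ r ∉ X)}
  have hT : univ ∈ T :=
    ⟨fun h => hU (univ_subset_iff.1 h), (inDeg_univ _).trans_le k.zero_le, .inl rfl⟩
  obtain ⟨X, ⟨hXU, hXk, hXr⟩, hXmin⟩ := T.toFinite.exists_minimal ⟨univ, hT⟩
  obtain ⟨u, ⟨huX, huU⟩, v, ⟨hvX, hvU⟩, huv⟩ := hE.exists_arc_into_diff hFU hrU hXk hXU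
  refine ⟨u, huU, v, hvU, huv, ?_⟩
  rw [insert_eq, ← sdiff_sdiff, sdiff_sdiff_comm]
  refine hEF.diff_singleton fun Y hY hrY ⟨_, huY, hvY⟩ => lt_of_not_ge fun hYk => huY ?_
  have hXY : X ∩ Y ∈ T := by
    refine ⟨fun h => hvU (h ⟨hvX, hvY⟩), ?_, .inr fun hr => hrY hr.2⟩
    rcases hXr with rfl | hrX
    · rwa [univ_inter]
    · exact hEF.inDeg_inter_le hrX hrY hY hXk hYk
  exact (hXmin hXY inter_subset_left huX).2

theorem exists_outBranching_of_isArborescenceOn (hE : CutCondition E r (k + 1))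
    (hF : IsArborescenceOn F r U) (hFE : F ⊆ E) (hEF : CutCondition (E \ F) r k) :
    ∃ B ⊆ E, IsOutBranching B r ∧ CutCondition (E \ B) r k := by
  induction hn : Uᶜ.ncard generalizing U F with
  | zero =>
    obtain rfl : U = univ := compl_empty_iff.1 ((ncard_eq_zero).1 hn)
    exact ⟨F, hFE, hF.isOutBranching, hEF⟩
  | succ n ih =>
    have hU : U ≠ univ := by rintro rfl; simp at hn
    obtain ⟨u, hu, v, hv, huv, hcut⟩ :=
      hE.exists_safe_arc hEF (fun a ha => (hF.2.1 a ha).1) hF.1 hU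
    refine ih (hF.insert_arc hu hv) (insert_subset huv.1 hFE) hcut ?_
    rw [insert_eq, compl_union, inter_comm, ← sdiff_eq, ncard_sdiff_singleton_of_mem hv, hn,
      Nat.add_sub_cancel]

/-- **Edmonds' branching theorem**. -/
theorem exists_disjoint_outBranchings {p : ℕ} (h : CutCondition E r p) :
    ∃ f : Fin p → Set (V × V),
      (∀ i, f i ⊆ E ∧ IsOutBranching (f i) r) ∧ Pairwise (Disjoint on f) := by
  induction p generalizing E with
  | zero => exact ⟨Fin.elim0, fun i => i.elim0, fun i => i.elim0⟩
  | succ p ih =>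
    obtain ⟨B, hBE, hB, hEB⟩ := h.exists_outBranching_of_isArborescenceOn
      (isArborescenceOn_empty r) (empty_subset E)
      (by rw [sdiff_empty]; exact fun X hX hrX => (h X hX hrX).trans' p.le_succ)
    obtain ⟨f, hf, hdisj⟩ := ih hEB
    refine ⟨Fin.cons B f,
      Fin.cases ⟨hBE, hB⟩ fun i => ⟨(hf i).1.trans sdiff_subset, (hf i).2⟩, ?_⟩
    have hBf : ∀ i, Disjoint B (f i) := fun i => disjoint_sdiff_right.mono_right (hf i).1
    intro i j hij
    cases i using Fin.cases <;> cases j using Fin.cases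
    · exact absurd rfl hij
    · exact hBf _
    · exact (hBf _).symm
    · exact hdisj fun h => hij (congrArg Fin.succ h)

end CutCondition

theorem cutCondition_of_disjoint_outBranchings {E : Set (V × V)} {r : V} {p : ℕ}
    {f : Fin p → Set (V × V)} (hf : ∀ i, f i ⊆ E ∧ IsOutBranching (f i) r)
    (hdisj : Pairwise (Disjoint on f)) : CutCondition E r p := by
  rintro X ⟨x, hx⟩ hrX
  have hentry : ∀ i, ∃ a ∈ f i, a ∈ inArcs E X := fun i => by
    obtain ⟨a, b, hab, ha, hb⟩ := ((hf i).2.2.2 x).exists_boundary_rel hrX hx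
    exact ⟨(a, b), hab, (hf i).1 hab, ha, hb⟩
  choose g hgf hgX using hentry
  have hg : InjOn g univ := fun i _ j _ hij =>
    by_contra fun hne => (hdisj hne).ne_of_mem (hgf i) (hij ▸ hgf j) rfl
  simpa [inDeg] using ncard_le_ncard_of_injOn g (fun i _ => hgX i) hg

variable {G : SimpleGraph V} {p : ℕ}

theorem PEdgeConnected.cutCondition (h : PEdgeConnected G p) (r : V) :
    CutCondition {a : V × V | G.Adj a.1 a.2} r p := by
  rintro X ⟨x, hx⟩ hrX
  by_contra! hlt
  set Y := uncurry Sym2.mk '' inArcs {a : V × V | G.Adj a.1 a.2} X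
  have hY : Y.encard < p := calc
    Y.encard ≤ (inArcs _ X).encard := encard_image_le _ _
    _ = inDeg _ X := (toFinite _).cast_ncard_eq.symm
    _ < p := by exact_mod_cast hlt
  obtain ⟨w⟩ := (h.2 Y hY).preconnected r x
  obtain ⟨d, -, hd₁, hd₂⟩ := w.exists_boundary_dart Xᶜ hrX (not_not.2 hx)
  obtain ⟨hadj, hdY⟩ := SimpleGraph.deleteEdges_adj.1 d.adj
  exact hdY ⟨d.toProd, ⟨hadj, hd₁, not_not.1 hd₂⟩, rfl⟩

theorem pEdgeConnected_of_cutCondition [Nontrivial V] {r : V}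
    (h : CutCondition {a : V × V | G.Adj a.1 a.2} r p) : PEdgeConnected G p := by
  refine ⟨exists_pair_ne V, fun Y hY => (SimpleGraph.connected_iff _).2 ⟨?_, ⟨r⟩⟩⟩
  suffices hr : ∀ v, (G.deleteEdges Y).Reachable r v from fun u v => (hr u).symm.trans (hr v)
  by_contra! ⟨v, hv⟩
  set X := {x | ¬ (G.deleteEdges Y).Reachable r x}
  have hXY : ∀ a ∈ inArcs {a : V × V | G.Adj a.1 a.2} X, uncurry Sym2.mk a ∈ Y :=
    fun a ⟨hadj, ha₁, ha₂⟩ => by_contra fun haY =>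
      ha₂ ((not_not.1 ha₁).trans (SimpleGraph.deleteEdges_adj.2 ⟨hadj, haY⟩).reachable)
  have hle : (p : ℕ∞) ≤ Y.encard := calc
    (p : ℕ∞) ≤ inDeg _ X := by exact_mod_cast h X ⟨v, hv⟩ fun hr => hr .rfl
    _ = (inArcs _ X).encard := (toFinite _).cast_ncard_eq
    _ = (uncurry Sym2.mk '' inArcs _ X).encard := ((injOn_sym2Mk_inArcs _ X).encard_image).symm
    _ ≤ Y.encard := encard_le_encard (image_subset_iff.2 hXY)
  exact hY.not_ge hle

end

/-- A graph `G` (on at least two vertices) is `p`-edge-connected iff the digraph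
`D_G`, obtained by replacing every edge `uv` by the two arcs `(u,v)` and `(v,u)`,
contains `p` pairwise arc-disjoint out-branchings rooted at `v_r`. -/
theorem stmt7 {V : Type*} [Fintype V] [Nontrivial V] (G : SimpleGraph V)
    (p : ℕ) (vr : V) :
    PEdgeConnected G p ↔
      ∃ f : Fin p → Set (V × V),
        (∀ k : Fin p, f k ⊆ {a : V × V | G.Adj a.1 a.2} ∧ IsOutBranching (f k) vr) ∧
        (∀ k l : Fin p, k ≠ l → Disjoint (f k) (f l)) :=
  ⟨fun h => (h.cutCondition vr).exists_disjoint_outBranchings,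
    fun ⟨_, hf, hdisj⟩ =>
      pEdgeConnected_of_cutCondition (cutCondition_of_disjoint_outBranchings hf hdisj)⟩
end

section
/- Let G be a graph with a vertex cover X such that G[X] is p-edge-connected, and let M be a maximal matching of G − N_G[L], where L is the set of vertices of G of degree less than p. Then |N_G(L)| + |M| ≤ |X|, and hence |N_G(L) ∪ V(M)| ≤ 2|X|. -/
/-- The set `L` of vertices of degree less than `p`. -/
def lowDeg {V : Type*} [Fintype V] (G : SimpleGraph V) [DecidableRel G.Adj]
    (p : ℕ) : Set V :=
  {v : V | G.degree v < p}

/-- The open neighborhood `N_G(L)` of a set `L`. -/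
def nbhdSet {V : Type*} (G : SimpleGraph V) (L : Set V) : Set V :=
  {v : V | ∃ u ∈ L, G.Adj u v}

/-! Every vertex of `X` has degree at least `p` in `G[X]`, since removing its fewer than `p`
edges would disconnect `G[X]`. So a low-degree vertex lies outside `X`, and the vertex cover `X`
must contain all of its neighbours: `N_G(L) ⊆ X`. Each edge of `M` also has an endpoint in `X`,
outside `N_G(L)` and different for different edges, which gives `|N_G(L)| + |M| ≤ |X|`; the
second bound follows from `|V(M)| ≤ 2|M|`. -/

lemma PEdgeConnected.le_encard_neighborSet {W : Type*} {H : SimpleGraph W} {p : ℕ}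
    (h : PEdgeConnected H p) (v : W) : (p : ℕ∞) ≤ (H.neighborSet v).encard := by
  classical
  by_contra! hlt
  obtain ⟨a, b, hab⟩ := h.1
  have : Nontrivial W := ⟨a, b, hab⟩
  have hinc : (H.incidenceSet v).encard < p := by
    rwa [Set.encard_congr (H.incidenceSetEquivNeighborSet v)]
  refine (h.2 _ hinc).preconnected.not_isIsolated v fun w hw => ?_
  rw [SimpleGraph.deleteEdges_adj] at hw
  exact hw.2 ⟨hw.1, Sym2.mem_mk_left v w⟩

lemma PEdgeConnected.le_degree_of_induce {V : Type*} [Fintype V] {G : SimpleGraph V}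
    [DecidableRel G.Adj] {X : Set V} {p : ℕ} (h : PEdgeConnected (G.induce X) p)
    {u : V} (hu : u ∈ X) : p ≤ G.degree u := by
  have himage : Subtype.val '' (G.induce X).neighborSet ⟨u, hu⟩ ⊆ G.neighborSet u := by
    rintro w ⟨w', hw', rfl⟩
    exact hw'
  have hdeg : (G.neighborSet u).encard = G.degree u := by
    simpa using Set.encard_coe_eq_coe_finsetCard (G.neighborFinset u)
  suffices (p : ℕ∞) ≤ G.degree u by exact_mod_cast this
  calc (p : ℕ∞) ≤ ((G.induce X).neighborSet ⟨u, hu⟩).encard := h.le_encard_neighborSet _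
    _ = (Subtype.val '' (G.induce X).neighborSet ⟨u, hu⟩).encard :=
      (Subtype.val_injective.encard_image _).symm
    _ ≤ (G.neighborSet u).encard := Set.encard_le_encard himage
    _ = G.degree u := hdeg

lemma IsVertexCover.exists_mem_of_mem_edgeSet {V : Type*} {G : SimpleGraph V} {C : Set V}
    (hC : IsVertexCover G C) {e : Sym2 V} (he : e ∈ G.edgeSet) : ∃ v ∈ e, v ∈ C := by
  induction e using Sym2.ind with
  | _ a b =>
    rcases hC he with h | h
    · exact ⟨a, Sym2.mem_mk_left a b, h⟩
    · exact ⟨b, Sym2.mem_mk_right a b, h⟩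

lemma IsVertexCover.nbhdSet_lowDeg_subset {V : Type*} [Fintype V] {G : SimpleGraph V}
    [DecidableRel G.Adj] {C : Set V} {p : ℕ} (hC : IsVertexCover G C)
    (hdeg : ∀ u ∈ C, p ≤ G.degree u) : nbhdSet G (lowDeg G p) ⊆ C := by
  rintro v ⟨u, hu, huv⟩
  exact (hC huv).resolve_left fun huC => (hdeg u huC).not_gt hu

lemma IsVertexCover.ncard_add_card_le {V : Type*} {G : SimpleGraph V} {C N : Set V}
    [Finite V] (hC : IsVertexCover G C) (hNC : N ⊆ C) (M : Finset (Sym2 V))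
    (hMedge : ∀ e ∈ M, e ∈ G.edgeSet) (hMN : ∀ e ∈ M, ∀ v ∈ e, v ∉ N)
    (hMdisj : ∀ e ∈ M, ∀ f ∈ M, e ≠ f → ∀ v : V, v ∈ e → v ∉ f) :
    N.ncard + M.card ≤ C.ncard := by
  have hpick : ∀ e : M, ∃ v : ↥(C \ N), (v : V) ∈ (e : Sym2 V) := by
    rintro ⟨e, he⟩
    obtain ⟨v, hve, hvC⟩ := hC.exists_mem_of_mem_edgeSet (hMedge e he)
    exact ⟨⟨v, hvC, hMN e he v hve⟩, hve⟩
  choose g hg using hpick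
  have hg_inj : Function.Injective g := by
    intro e f hef
    by_contra hne
    exact hMdisj e e.2 f f.2 (Subtype.coe_ne_coe.2 hne) _ (hg e) (hef ▸ hg f)
  have hcard : M.card ≤ (C \ N).ncard := by
    simpa using Nat.card_le_card_of_injective g hg_inj
  have hsplit := Set.ncard_sdiff_add_ncard_of_subset hNC
  omega

lemma Sym2.ncard_setOf_mem_le {α : Type*} (e : Sym2 α) : {v | v ∈ e}.ncard ≤ 2 := by
  induction e using Sym2.ind with
  | _ a b =>
    have hpair : {v | v ∈ s(a, b)} = {a, b} := by
      ext
      simp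
    rw [hpair]
    exact (Set.ncard_insert_le a {b}).trans_eq (by rw [Set.ncard_singleton])

lemma ncard_setOf_exists_mem_sym2_le {α : Type*} (M : Finset (Sym2 α)) :
    {v | ∃ e ∈ M, v ∈ e}.ncard ≤ 2 * M.card := by
  have hunion : {v | ∃ e ∈ M, v ∈ e} = ⋃ e ∈ M, {v | v ∈ e} := by
    ext v
    simp
  calc {v | ∃ e ∈ M, v ∈ e}.ncard ≤ ∑ e ∈ M, {v | v ∈ e}.ncard :=
        hunion ▸ M.set_ncard_biUnion_le _
    _ ≤ ∑ _e ∈ M, 2 := Finset.sum_le_sum fun e _ => e.ncard_setOf_mem_le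
    _ = 2 * M.card := by rw [Finset.sum_const, smul_eq_mul, mul_comm]

theorem stmt14_general {V : Type*} [Fintype V] (G : SimpleGraph V)
    [DecidableRel G.Adj] (p : ℕ) (X : Set V)
    (hXvc : IsVertexCover G X) (hXconn : PEdgeConnected (G.induce X) p)
    (M : Finset (Sym2 V))
    (hMedge : ∀ e ∈ M, e ∈ G.edgeSet)
    (hMavoid : ∀ e ∈ M, ∀ v ∈ e,
      v ∉ lowDeg G p ∧ v ∉ nbhdSet G (lowDeg G p))
    (hMdisj : ∀ e ∈ M, ∀ f ∈ M, e ≠ f → ∀ v : V, v ∈ e → v ∉ f) :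
    (nbhdSet G (lowDeg G p)).ncard + M.card ≤ X.ncard ∧
      (nbhdSet G (lowDeg G p) ∪ {v : V | ∃ e ∈ M, v ∈ e}).ncard ≤ 2 * X.ncard := by
  have hNX : nbhdSet G (lowDeg G p) ⊆ X :=
    hXvc.nbhdSet_lowDeg_subset fun _ hu => hXconn.le_degree_of_induce hu
  have hcount := hXvc.ncard_add_card_le hNX M hMedge (fun e he v hv => (hMavoid e he v hv).2)
    hMdisj
  refine ⟨hcount, ?_⟩
  have hunion := Set.ncard_union_le (nbhdSet G (lowDeg G p)) {v : V | ∃ e ∈ M, v ∈ e}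
  have hverts := ncard_setOf_exists_mem_sym2_le M
  omega

/-- If `X` is a vertex cover of `G` inducing a `p`-edge-connected subgraph and
`M` is a maximal matching of `G - N_G[L]`, where `L` is the set of vertices of
degree less than `p`, then `|N_G(L)| + |M| ≤ |X|`, and hence
`|N_G(L) ∪ V(M)| ≤ 2|X|`. -/
theorem stmt14 {V : Type*} [Fintype V] [DecidableEq V] (G : SimpleGraph V)
    [DecidableRel G.Adj] (p : ℕ) (hp : 1 ≤ p) (X : Set V)
    (hXvc : IsVertexCover G X) (hXconn : PEdgeConnected (G.induce X) p)
    (M : Finset (Sym2 V))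
    (hMedge : ∀ e ∈ M, e ∈ G.edgeSet)
    (hMavoid : ∀ e ∈ M, ∀ v ∈ e,
      v ∉ lowDeg G p ∧ v ∉ nbhdSet G (lowDeg G p))
    (hMdisj : ∀ e ∈ M, ∀ f ∈ M, e ≠ f → ∀ v : V, v ∈ e → v ∉ f)
    (hMmax : ∀ u v : V, G.Adj u v →
      u ∉ lowDeg G p → u ∉ nbhdSet G (lowDeg G p) →
      v ∉ lowDeg G p → v ∉ nbhdSet G (lowDeg G p) →
      s(u, v) ∈ M ∨ ∃ f ∈ M, u ∈ f ∨ v ∈ f) :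
    (nbhdSet G (lowDeg G p)).ncard + M.card ≤ X.ncard ∧
      (nbhdSet G (lowDeg G p) ∪ {v : V | ∃ e ∈ M, v ∈ e}).ncard ≤ 2 * X.ncard :=
  stmt14_general G p X hXvc hXconn M hMedge hMavoid hMdisj
end

section
/- Let G be a graph and S ⊆ V(G) a vertex cover of G with G[S] p-edge-connected. Suppose Y ⊇ S and every vertex of Y \ S has at least p neighbors in S. Then G[Y] is p-edge-connected. -/
theorem Function.Injective.encard_preimage_le {α β : Type*} {f : α → β} (hf : f.Injective)
    (t : Set β) : (f ⁻¹' t).encard ≤ t.encard := by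
  rw [← hf.encard_image]
  exact Set.encard_le_encard (Set.image_preimage_subset f t)

namespace SimpleGraph

variable {V W : Type*}

def Hom.deleteEdges {G : SimpleGraph V} {H : SimpleGraph W} (f : G →g H) (F : Set (Sym2 W)) :
    G.deleteEdges (Sym2.map f ⁻¹' F) →g H.deleteEdges F where
  toFun := f
  map_rel' := by
    simp only [deleteEdges_adj, Set.mem_preimage, Sym2.map_mk]
    exact fun ⟨hadj, hF⟩ => ⟨f.map_adj hadj, hF⟩

theorem exists_adj_deleteEdges_of_encard_lt (G : SimpleGraph V) {v : V} {T : Set V}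
    {F : Set (Sym2 V)} (hF : F.encard < (G.neighborSet v ∩ T).encard) :
    ∃ w ∈ T, (G.deleteEdges F).Adj v w := by
  by_contra! hall
  have hmaps : Set.MapsTo (fun w => s(v, w)) (G.neighborSet v ∩ T) F := fun w ⟨hadj, hw⟩ => by
    by_contra hnot
    exact hall w hw ((deleteEdges_adj ..).mpr ⟨hadj, hnot⟩)
  have hinj : Set.InjOn (fun w => s(v, w)) (G.neighborSet v ∩ T) :=
    fun _ _ _ _ h => Sym2.congr_right.mp h
  exact (Set.encard_le_encard_of_injOn hmaps hinj).not_gt hF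

theorem encard_neighborSet_induce_inter_range_inclusion (G : SimpleGraph V) {S Y : Set V}
    (hSY : S ⊆ Y) (y : Y) :
    ((G.induce Y).neighborSet y ∩ Set.range (Set.inclusion hSY)).encard =
      (G.neighborSet y ∩ S).encard := by
  rw [← Subtype.val_injective.encard_image]
  congr 1
  ext v
  simp only [Set.mem_image, Set.mem_inter_iff, neighborSet_induce, Set.mem_preimage,
    Set.range_inclusion, Subtype.exists, exists_and_right, exists_eq_right]
  exact ⟨fun ⟨_, h⟩ => h, fun h => ⟨hSY h.2, h⟩⟩

end SimpleGraph

theorem PEdgeConnected.of_embedding {U W : Type*} {K : SimpleGraph U} {H : SimpleGraph W}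
    {p : ℕ} (φ : K ↪g H) (hK : PEdgeConnected K p)
    (hnb : ∀ w ∉ Set.range φ, (p : ℕ∞) ≤ (H.neighborSet w ∩ Set.range φ).encard) :
    PEdgeConnected H p := by
  obtain ⟨⟨a, b, hab⟩, hKdel⟩ := hK
  refine ⟨⟨φ a, φ b, φ.injective.ne hab⟩, fun F hF => ?_⟩
  have hKF : (K.deleteEdges (Sym2.map φ ⁻¹' F)).Connected :=
    hKdel _ (((Sym2.map.injective φ.injective).encard_preimage_le F).trans_lt hF)
  have reach_range : ∀ w, ∃ u, (H.deleteEdges F).Reachable (φ u) w := by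
    intro w
    by_cases hw : w ∈ Set.range φ
    · obtain ⟨u, rfl⟩ := hw
      exact ⟨u, .rfl⟩
    · obtain ⟨_, ⟨u, rfl⟩, hadj⟩ :=
        H.exists_adj_deleteEdges_of_encard_lt (hF.trans_le (hnb w hw))
      exact ⟨u, hadj.symm.reachable⟩
  refine (SimpleGraph.connected_iff_exists_forall_reachable _).mpr ⟨φ a, fun w => ?_⟩
  obtain ⟨u, hu⟩ := reach_range w
  exact ((hKF.preconnected a u).map (φ.toHom.deleteEdges F)).trans hu

theorem stmt15_general {V : Type*} (G : SimpleGraph V) (p : ℕ) (S Y : Set V)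
    (hconn : PEdgeConnected (G.induce S) p)
    (hSY : S ⊆ Y)
    (hnb : ∀ v ∈ Y \ S, (p : ℕ∞) ≤ (G.neighborSet v ∩ S).encard) :
    PEdgeConnected (G.induce Y) p := by
  refine hconn.of_embedding (G.induceHomOfLE hSY) fun y hy => ?_
  have hyS : (y : V) ∉ S := fun h => hy ⟨⟨y, h⟩, rfl⟩
  rw [show Set.range (G.induceHomOfLE hSY) = Set.range (Set.inclusion hSY) from rfl,
    G.encard_neighborSet_induce_inter_range_inclusion hSY y]
  exact hnb y ⟨y.2, hyS⟩

/-- If `S` is a vertex cover of `G` with `G[S]` `p`-edge-connected, and `Y ⊇ S`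
is such that every vertex of `Y \ S` has at least `p` neighbors in `S`, then
`G[Y]` is `p`-edge-connected. -/
theorem stmt15 {V : Type*} (G : SimpleGraph V) (p : ℕ) (S Y : Set V)
    (hvc : IsVertexCover G S) (hconn : PEdgeConnected (G.induce S) p)
    (hSY : S ⊆ Y)
    (hnb : ∀ v ∈ Y \ S, (p : ℕ∞) ≤ (G.neighborSet v ∩ S).encard) :
    PEdgeConnected (G.induce Y) p :=
  stmt15_general G p S Y hconn hSY hnb
end
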